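/- arXiv:1302.2755 — 2 statements merged into one kernel-verified Lean document; each statement's English description precedes it below -/
import Mathlib

section
/- For every r ∈ (0,1), the function m is differentiable at r and its derivative satisfies m'(r) = (π − 4 E'(r) K(r)) / (π r). -/
open Real Set Filter

/-- Complete elliptic integral of the first kind. -/
noncomputable def K (r : ℝ) : ℝ :=
  ∫ θ in (0:ℝ)..(π/2), 1 / Real.sqrt (1 - r^2 * Real.sin θ ^ 2)

/-- Complete elliptic integral of the second kind. -/
noncomputable def E (r : ℝ) : ℝ :=
  ∫ θ in (0:ℝ)..(π/2), Real.sqrt (1 - r^2 * Real.sin θ ^ 2)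

/-- Complementary complete elliptic integral of the first kind: `K'(r) = K(√(1-r²))`. -/
noncomputable def K' (r : ℝ) : ℝ := K (Real.sqrt (1 - r^2))

/-- Complementary complete elliptic integral of the second kind: `E'(r) = E(√(1-r²))`. -/
noncomputable def E' (r : ℝ) : ℝ := E (Real.sqrt (1 - r^2))

/-- The special function `m(r) = (2/π) r'² K(r) K'(r)` (here `r'² = 1 - r²`). -/
noncomputable def m (r : ℝ) : ℝ := (2/π) * (1 - r^2) * K r * K' r

/-!
Differentiating under the integral sign gives the classical formulas
`dK/dr = (E - r'²K)/(r r'²)` and `dE/dr = (E - K)/r`; the only non-mechanical step is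
`∫ Δ^(-3/2) = E/r'²` for `Δ = 1 - r² sin² θ`, read off from the antiderivative
`r² sin θ cos θ / √Δ`. By the chain rule they give the derivatives of `K'` and `E'`, which make
the Legendre combination `E K' + E' K - K K'` constant on `(0, 1)`. Writing it as
`E' K - K' (K - E)`, its limit at `0⁺` is `π/2`: `E' → E 1 = 1`, `K → π/2`, and
`0 ≤ K' (K - E) ≤ (π/(2r)) · r² K → 0`. Finally `m' = 2 (E K' - E' K - K K')/(π r)`, and
Legendre's relation turns this into `(π - 4 E' K)/(π r)`.
-/

open MeasureTheory intervalIntegral Topology Metric Function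

theorem hasDerivAt_intervalIntegral_of_continuousOn {V : Type*} [NormedAddCommGroup V]
    [NormedSpace ℝ V] {F F' : ℝ → ℝ → V} {U : Set ℝ} {a b x₀ : ℝ} (hU : IsOpen U)
    (hx₀ : x₀ ∈ U) (hF : ∀ x ∈ U, ContinuousOn (F x) (uIcc a b))
    (hF' : ContinuousOn (uncurry F') (U ×ˢ uIcc a b))
    (hderiv : ∀ x ∈ U, ∀ t ∈ uIcc a b, HasDerivAt (F · t) (F' x t) x) :
    HasDerivAt (fun x => ∫ t in a..b, F x t) (∫ t in a..b, F' x₀ t) x₀ := by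
  obtain ⟨ε, hε, hball⟩ := nhds_basis_closedBall.mem_iff.1 (hU.mem_nhds hx₀)
  obtain ⟨C, hC⟩ := ((isCompact_closedBall x₀ ε).prod isCompact_uIcc).exists_bound_of_continuousOn
    (hF'.mono (prod_mono hball subset_rfl))
  refine (hasDerivAt_integral_of_dominated_loc_of_deriv_le (bound := fun _ => C)
    (closedBall_mem_nhds x₀ hε) ?_ (hF x₀ hx₀).intervalIntegrable ?_ ?_
    intervalIntegrable_const ?_).2
  · filter_upwards [hU.mem_nhds hx₀] with x hx
    exact ((hF x hx).mono uIoc_subset_uIcc).aestronglyMeasurable measurableSet_uIoc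
  · have : ContinuousOn (F' x₀) (uIcc a b) :=
      hF'.comp (continuousOn_const.prodMk continuousOn_id) fun t ht => ⟨hx₀, ht⟩
    exact (this.mono uIoc_subset_uIcc).aestronglyMeasurable measurableSet_uIoc
  · exact ae_of_all _ fun t ht x hx => hC (x, t) ⟨hx, uIoc_subset_uIcc ht⟩
  · exact ae_of_all _ fun t ht x hx => hderiv x (hball hx) t (uIoc_subset_uIcc ht)

noncomputable def delta (r θ : ℝ) : ℝ := 1 - r ^ 2 * sin θ ^ 2

lemma one_sub_sq_le_delta (r θ : ℝ) : 1 - r ^ 2 ≤ delta r θ := by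
  unfold delta
  nlinarith [sq_nonneg r, sin_sq_le_one θ]

lemma delta_pos {r : ℝ} (hr : r ^ 2 < 1) (θ : ℝ) : 0 < delta r θ :=
  (sub_pos.2 hr).trans_le (one_sub_sq_le_delta r θ)

lemma sqrt_delta_pos {r : ℝ} (hr : r ^ 2 < 1) (θ : ℝ) : 0 < √(delta r θ) :=
  sqrt_pos.2 (delta_pos hr θ)

@[fun_prop]
lemma continuous_delta : Continuous (uncurry delta) := by
  unfold delta
  fun_prop

lemma continuous_sqrt_delta (r : ℝ) : Continuous fun θ => √(delta r θ) := by
  fun_prop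

lemma continuous_inv_sqrt_delta {r : ℝ} (hr : r ^ 2 < 1) :
    Continuous fun θ => 1 / √(delta r θ) := by
  fun_prop (disch := exact fun θ => (sqrt_delta_pos hr θ).ne')

lemma continuous_inv_delta_mul_sqrt_delta {r : ℝ} (hr : r ^ 2 < 1) :
    Continuous fun θ => 1 / (delta r θ * √(delta r θ)) := by
  fun_prop (disch := exact fun θ => (mul_pos (delta_pos hr θ) (sqrt_delta_pos hr θ)).ne')

lemma hasDerivAt_delta_left (r θ : ℝ) :
    HasDerivAt (delta · θ) (-(2 * r * sin θ ^ 2)) r := by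
  simpa [delta] using ((hasDerivAt_pow 2 r).mul_const (sin θ ^ 2)).const_sub 1

lemma hasDerivAt_delta_right (r θ : ℝ) :
    HasDerivAt (delta r) (-(2 * r ^ 2 * sin θ * cos θ)) θ := by
  have h : HasDerivAt (fun θ => 1 - r ^ 2 * sin θ ^ 2) (-(r ^ 2 * (2 * sin θ * cos θ))) θ := by
    simpa using (((hasDerivAt_sin θ).pow 2).const_mul (r ^ 2)).const_sub 1
  exact h.congr_deriv (by ring)

lemma K_eq (r : ℝ) : K r = ∫ θ in (0:ℝ)..π / 2, 1 / √(delta r θ) := rfl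

lemma E_eq (r : ℝ) : E r = ∫ θ in (0:ℝ)..π / 2, √(delta r θ) := rfl

noncomputable def D (r : ℝ) : ℝ := ∫ θ in (0:ℝ)..π / 2, sin θ ^ 2 / √(delta r θ)

lemma K_sub_E_eq {r : ℝ} (hr : r ^ 2 < 1) : K r - E r = r ^ 2 * D r := by
  rw [K_eq, E_eq, D, ← integral_sub ((continuous_inv_sqrt_delta hr).intervalIntegrable _ _)
    ((continuous_sqrt_delta r).intervalIntegrable _ _), ← intervalIntegral.integral_const_mul]
  refine integral_congr fun θ _ => ?_
  have hq := sqrt_delta_pos hr θ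
  field_simp
  rw [sq_sqrt (delta_pos hr θ).le, delta]
  ring

lemma isOpen_sq_lt_one : IsOpen {x : ℝ | x ^ 2 < 1} :=
  isOpen_lt (by fun_prop) continuous_const

lemma hasDerivAt_K_integral {r : ℝ} (hr : r ^ 2 < 1) :
    HasDerivAt K (r * ∫ θ in (0:ℝ)..π / 2, sin θ ^ 2 / (delta r θ * √(delta r θ))) r := by
  have key := hasDerivAt_intervalIntegral_of_continuousOn (a := 0) (b := π / 2)
    (F := fun x θ => 1 / √(delta x θ))
    (F' := fun x θ => x * (sin θ ^ 2 / (delta x θ * √(delta x θ))))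
    isOpen_sq_lt_one hr (fun x hx => (continuous_inv_sqrt_delta hx).continuousOn) ?_ ?_
  · rwa [intervalIntegral.integral_const_mul] at key
  · have : ∀ p ∈ {x : ℝ | x ^ 2 < 1} ×ˢ uIcc 0 (π / 2), delta p.1 p.2 * √(delta p.1 p.2) ≠ 0 :=
      fun p hp => (mul_pos (delta_pos hp.1 p.2) (sqrt_delta_pos hp.1 p.2)).ne'
    fun_prop (disch := assumption)
  · intro x hx θ _
    have hδ := delta_pos hx θ
    refine ((hasDerivAt_const x 1).div ((hasDerivAt_delta_left x θ).sqrt hδ.ne')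
      (sqrt_delta_pos hx θ).ne').congr_deriv ?_
    field_simp
    rw [sq_sqrt hδ.le]
    ring

lemma hasDerivAt_E_neg_mul_D {r : ℝ} (hr : r ^ 2 < 1) : HasDerivAt E (-(r * D r)) r := by
  have key := hasDerivAt_intervalIntegral_of_continuousOn (a := 0) (b := π / 2)
    (F := fun x θ => √(delta x θ)) (F' := fun x θ => -(x * (sin θ ^ 2 / √(delta x θ))))
    isOpen_sq_lt_one hr (fun x _ => (continuous_sqrt_delta x).continuousOn) ?_ ?_
  · rwa [intervalIntegral.integral_neg, intervalIntegral.integral_const_mul] at key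
  · have : ∀ p ∈ {x : ℝ | x ^ 2 < 1} ×ˢ uIcc 0 (π / 2), √(delta p.1 p.2) ≠ 0 :=
      fun p hp => (sqrt_delta_pos hp.1 p.2).ne'
    fun_prop (disch := assumption)
  · intro x hx θ _
    refine ((hasDerivAt_delta_left x θ).sqrt (delta_pos hx θ).ne').congr_deriv ?_
    field_simp

lemma hasDerivAt_sin_mul_cos_div_sqrt_delta {r : ℝ} (hr : r ^ 2 < 1) (θ : ℝ) :
    HasDerivAt (fun θ => r ^ 2 * sin θ * cos θ / √(delta r θ))
      (√(delta r θ) - (1 - r ^ 2) * (1 / (delta r θ * √(delta r θ)))) θ := by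
  have hδ := delta_pos hr θ
  have hq := sqrt_delta_pos hr θ
  have hnum : HasDerivAt (fun θ => r ^ 2 * sin θ * cos θ) (r ^ 2 * (cos θ ^ 2 - sin θ ^ 2)) θ :=
    (((hasDerivAt_sin θ).const_mul (r ^ 2)).mul (hasDerivAt_cos θ)).congr_deriv (by ring)
  refine (hnum.div ((hasDerivAt_delta_right r θ).sqrt hδ.ne') hq.ne').congr_deriv ?_
  field_simp
  rw [sq_sqrt hδ.le, cos_sq' θ, delta]
  ring

lemma integral_inv_delta_mul_sqrt_delta {r : ℝ} (hr : r ^ 2 < 1) :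
    ∫ θ in (0:ℝ)..π / 2, 1 / (delta r θ * √(delta r θ)) = E r / (1 - r ^ 2) := by
  have hint := (continuous_inv_delta_mul_sqrt_delta hr).intervalIntegrable (μ := volume) 0 (π / 2)
  have hftc := integral_eq_sub_of_hasDerivAt (a := 0) (b := π / 2)
    (fun θ _ => hasDerivAt_sin_mul_cos_div_sqrt_delta hr θ)
    (((continuous_sqrt_delta r).intervalIntegrable _ _).sub (hint.const_mul _))
  rw [integral_sub ((continuous_sqrt_delta r).intervalIntegrable _ _) (hint.const_mul _),
    intervalIntegral.integral_const_mul, ← E_eq] at hftc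
  simp only [cos_pi_div_two, sin_zero, mul_zero, zero_mul, zero_div, sub_zero] at hftc
  field_simp [(sub_pos.2 hr).ne']
  linarith

lemma hasDerivAt_K {r : ℝ} (hr0 : r ≠ 0) (hr : r ^ 2 < 1) :
    HasDerivAt K ((E r - (1 - r ^ 2) * K r) / (r * (1 - r ^ 2))) r := by
  refine (hasDerivAt_K_integral hr).congr_deriv ?_
  have hsplit : ∀ θ ∈ uIcc (0:ℝ) (π / 2), sin θ ^ 2 / (delta r θ * √(delta r θ)) =
      (1 / (delta r θ * √(delta r θ)) - 1 / √(delta r θ)) / r ^ 2 := by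
    intro θ _
    have hδ := delta_pos hr θ
    field_simp
    unfold delta
    ring
  rw [integral_congr hsplit, intervalIntegral.integral_div,
    integral_sub ((continuous_inv_delta_mul_sqrt_delta hr).intervalIntegrable _ _)
      ((continuous_inv_sqrt_delta hr).intervalIntegrable _ _),
    integral_inv_delta_mul_sqrt_delta hr, ← K_eq]
  field_simp [(sub_pos.2 hr).ne']

lemma hasDerivAt_E {r : ℝ} (hr0 : r ≠ 0) (hr : r ^ 2 < 1) :
    HasDerivAt E ((E r - K r) / r) r := by
  refine (hasDerivAt_E_neg_mul_D hr).congr_deriv ?_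
  field_simp
  linear_combination K_sub_E_eq hr

lemma hasDerivAt_sqrt_one_sub_sq {r : ℝ} (hr : r ^ 2 < 1) :
    HasDerivAt (fun x => √(1 - x ^ 2)) (-r / √(1 - r ^ 2)) r := by
  have h : HasDerivAt (fun x => 1 - x ^ 2) (-(2 * r)) r := by
    simpa using (hasDerivAt_pow 2 r).const_sub 1
  refine (h.sqrt (sub_pos.2 hr).ne').congr_deriv ?_
  field_simp

lemma hasDerivAt_K' {r : ℝ} (hr0 : r ≠ 0) (hr : r ^ 2 < 1) :
    HasDerivAt K' (-(E' r - r ^ 2 * K' r) / (r * (1 - r ^ 2))) r := by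
  have hs : √(1 - r ^ 2) ^ 2 = 1 - r ^ 2 := sq_sqrt (sub_pos.2 hr).le
  have hs0 : √(1 - r ^ 2) ≠ 0 := (sqrt_pos.2 (sub_pos.2 hr)).ne'
  have h1 : 1 - r ^ 2 ≠ 0 := (sub_pos.2 hr).ne'
  refine ((hasDerivAt_K hs0 (by rw [hs]; exact sub_lt_self 1 (by positivity))).comp r
    (hasDerivAt_sqrt_one_sub_sq hr)).congr_deriv ?_
  change (E' r - (1 - √(1 - r ^ 2) ^ 2) * K' r) / (√(1 - r ^ 2) * (1 - √(1 - r ^ 2) ^ 2)) * _ = _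
  rw [hs, sub_sub_cancel]
  field_simp
  rw [hs]

lemma hasDerivAt_E' {r : ℝ} (hr0 : r ≠ 0) (hr : r ^ 2 < 1) :
    HasDerivAt E' (-(r * (E' r - K' r)) / (1 - r ^ 2)) r := by
  have hs : √(1 - r ^ 2) ^ 2 = 1 - r ^ 2 := sq_sqrt (sub_pos.2 hr).le
  have hs0 : √(1 - r ^ 2) ≠ 0 := (sqrt_pos.2 (sub_pos.2 hr)).ne'
  have h1 : 1 - r ^ 2 ≠ 0 := (sub_pos.2 hr).ne'
  refine ((hasDerivAt_E hs0 (by rw [hs]; exact sub_lt_self 1 (by positivity))).comp r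
    (hasDerivAt_sqrt_one_sub_sq hr)).congr_deriv ?_
  change (E' r - K' r) / √(1 - r ^ 2) * _ = _
  field_simp
  rw [hs]

lemma hasDerivAt_legendre {r : ℝ} (hr0 : r ≠ 0) (hr : r ^ 2 < 1) :
    HasDerivAt (fun x => E x * K' x + E' x * K x - K x * K' x) 0 r := by
  have hK := hasDerivAt_K hr0 hr
  have hK' := hasDerivAt_K' hr0 hr
  refine (((hasDerivAt_E hr0 hr).mul hK').add ((hasDerivAt_E' hr0 hr).mul hK)).sub
    (hK.mul hK') |>.congr_deriv ?_
  field_simp [(sub_pos.2 hr).ne']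
  ring

lemma K_nonneg (r : ℝ) : 0 ≤ K r :=
  integral_nonneg (by positivity) fun θ _ => by positivity

lemma D_nonneg (r : ℝ) : 0 ≤ D r :=
  integral_nonneg (by positivity) fun θ _ => by positivity

lemma D_le_K {r : ℝ} (hr : r ^ 2 < 1) : D r ≤ K r := by
  have hcont : Continuous fun θ => sin θ ^ 2 / √(delta r θ) := by
    fun_prop (disch := exact fun θ => (sqrt_delta_pos hr θ).ne')
  rw [D, K_eq]
  exact integral_mono_on (by positivity) (hcont.intervalIntegrable _ _)
    ((continuous_inv_sqrt_delta hr).intervalIntegrable _ _)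
    fun θ _ => div_le_div_of_nonneg_right (sin_sq_le_one θ) (sqrt_nonneg _)

lemma K_le {r : ℝ} (hr : r ^ 2 < 1) : K r ≤ π / 2 / √(1 - r ^ 2) := by
  have h := integral_mono_on (a := 0) (b := π / 2) (μ := volume) (by positivity)
    ((continuous_inv_sqrt_delta hr).intervalIntegrable _ _) intervalIntegrable_const
    fun θ _ => one_div_le_one_div_of_le (sqrt_pos.2 (sub_pos.2 hr))
      (sqrt_le_sqrt (one_sub_sq_le_delta r θ))
  rw [intervalIntegral.integral_const, smul_eq_mul] at h
  rw [K_eq]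
  convert h using 1
  ring

lemma K'_le {r : ℝ} (hr0 : 0 < r) (hr1 : r ≤ 1) : K' r ≤ π / 2 / r := by
  have hs : √(1 - r ^ 2) ^ 2 = 1 - r ^ 2 := sq_sqrt (by nlinarith)
  have h := K_le (r := √(1 - r ^ 2)) (by rw [hs]; nlinarith)
  rwa [hs, sub_sub_cancel, sqrt_sq hr0.le] at h

lemma K_zero : K 0 = π / 2 := by
  simp [K]

lemma E_one : E 1 = 1 := by
  have hcos : ∀ θ ∈ uIcc (0:ℝ) (π / 2), √(1 - 1 ^ 2 * sin θ ^ 2) = cos θ := by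
    intro θ hθ
    rw [uIcc_of_le (by positivity)] at hθ
    rw [one_pow, one_mul, ← cos_sq',
      sqrt_sq (cos_nonneg_of_mem_Icc ⟨by linarith [hθ.1, pi_pos], hθ.2⟩)]
  rw [E, integral_congr hcos, integral_cos, sin_pi_div_two, sin_zero, sub_zero]

lemma tendsto_K_zero : Tendsto K (𝓝 0) (𝓝 (π / 2)) :=
  K_zero ▸ (hasDerivAt_K_integral (by norm_num)).continuousAt.tendsto

lemma tendsto_E'_zero : Tendsto E' (𝓝 0) (𝓝 1) := by
  have hE : Continuous E :=
    continuous_parametric_intervalIntegral_of_continuous' (by fun_prop) _ _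
  have h := (hE.comp (by fun_prop : Continuous fun x : ℝ => √(1 - x ^ 2))).tendsto 0
  rwa [comp_apply, zero_pow two_ne_zero, sub_zero, sqrt_one, E_one] at h

lemma tendsto_K'_mul_K_sub_E : Tendsto (fun x => K' x * (K x - E x)) (𝓝[>] 0) (𝓝 0) := by
  have hbound : Tendsto (fun x => π / 2 * x * K x) (𝓝 0) (𝓝 0) := by
    simpa using (tendsto_id.const_mul (π / 2)).mul tendsto_K_zero
  refine tendsto_of_tendsto_of_tendsto_of_le_of_le' tendsto_const_nhds
    (hbound.mono_left nhdsWithin_le_nhds) ?_ ?_ <;>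
    filter_upwards [Ioo_mem_nhdsGT one_pos] with x ⟨hx0, hx1⟩
  all_goals
    have hx : x ^ 2 < 1 := by nlinarith
    rw [K_sub_E_eq hx]
  · exact mul_nonneg (K_nonneg _) (mul_nonneg (sq_nonneg x) (D_nonneg x))
  · calc K' x * (x ^ 2 * D x) ≤ π / 2 / x * (x ^ 2 * K x) :=
          mul_le_mul (K'_le hx0 hx1.le) (mul_le_mul_of_nonneg_left (D_le_K hx) (sq_nonneg x))
            (mul_nonneg (sq_nonneg x) (D_nonneg x)) (by positivity)
      _ = π / 2 * x * K x := by field_simp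

lemma tendsto_legendre :
    Tendsto (fun x => E x * K' x + E' x * K x - K x * K' x) (𝓝[>] 0) (𝓝 (π / 2)) := by
  have h := ((tendsto_E'_zero.mul tendsto_K_zero).mono_left nhdsWithin_le_nhds).sub
    tendsto_K'_mul_K_sub_E
  rw [one_mul, sub_zero] at h
  exact h.congr fun x => by ring

theorem legendre_relation {r : ℝ} (hr : r ∈ Ioo (0:ℝ) 1) :
    E r * K' r + E' r * K r - K r * K' r = π / 2 := by
  set W := fun x => E x * K' x + E' x * K x - K x * K' x
  have hderiv : ∀ x ∈ Ioo (0:ℝ) 1, HasDerivAt W 0 x := fun x hx =>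
    hasDerivAt_legendre hx.1.ne' (by nlinarith [hx.1, hx.2])
  have hconst : ∀ x ∈ Ioo (0:ℝ) 1, W x = W r := fun x hx =>
    isOpen_Ioo.is_const_of_deriv_eq_zero isPreconnected_Ioo
      (fun y hy => (hderiv y hy).differentiableAt.differentiableWithinAt)
      (fun y hy => (hderiv y hy).deriv) hx hr
  have hlim : Tendsto W (𝓝[>] 0) (𝓝 (W r)) :=
    tendsto_const_nhds.congr' (by
      filter_upwards [Ioo_mem_nhdsGT one_pos] with x hx using (hconst x hx).symm)
  exact tendsto_nhds_unique hlim tendsto_legendre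

lemma hasDerivAt_m {r : ℝ} (hr0 : r ≠ 0) (hr : r ^ 2 < 1) :
    HasDerivAt m (2 * (E r * K' r - E' r * K r - K r * K' r) / (π * r)) r := by
  have hfactor : HasDerivAt (fun x => 2 / π * (1 - x ^ 2)) (2 / π * -(2 * r)) r := by
    simpa using ((hasDerivAt_pow 2 r).const_sub 1).const_mul (2 / π)
  refine ((hfactor.mul (hasDerivAt_K hr0 hr)).mul (hasDerivAt_K' hr0 hr)).congr_deriv ?_
  simp only [Pi.mul_apply]
  field_simp [(sub_pos.2 hr).ne']
  ring

theorem stmt_6 :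
    ∀ r ∈ Set.Ioo (0:ℝ) 1, HasDerivAt m ((π - 4 * E' r * K r) / (π * r)) r := by
  intro r hr
  convert hasDerivAt_m hr.1.ne' (by nlinarith [hr.1, hr.2]) using 2
  linarith [legendre_relation hr]
end

section
/- Let λ be a real number. If the function h(r) = ((4 E'(r) K(r) − π) / m(r)) · (m(r)/r)^λ is strictly increasing on (0,1), then λ ≤ 0. -/
open Real Set Filter

/-- The function `h` from Lemma 2.3, depending on the parameter `lam`. -/
noncomputable def h (lam r : ℝ) : ℝ :=
  ((4 * E' r * K r - π) / m r) * (m r / r) ^ lam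

/-!
If `λ > 0`, then `h λ r → ∞` as `r → 0⁺`, which is incompatible with `h λ r < h λ (1/2)` for
`r < 1/2`. Indeed, on `(0, 1/2]` the numerator `4 E' K - π` is at least `π` (from `K ≥ π/2`,
`E' ≥ 1`), and `1 ≤ m(r) ≤ K'(r) = O(log (1/r))`, so `h λ r = (4 E' K - π) m^(λ-1) r^(-λ)` is
bounded below by a constant times `1 / (r^λ log (3/r))`. The logarithmic bound on `K'` comes from
Jordan's inequality `cos θ ≥ 1 - 2θ/π`, which majorizes the integrand of `K'` by one with an
explicit `arsinh` antiderivative.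
-/

open Topology

lemma one_sub_sq_mul_sin_sq_pos {k : ℝ} (hk : k ^ 2 < 1) (θ : ℝ) :
    0 < 1 - k ^ 2 * sin θ ^ 2 := by
  nlinarith [mul_le_mul_of_nonneg_left (sin_sq_le_one θ) (sq_nonneg k)]

lemma continuous_K_integrand {k : ℝ} (hk : k ^ 2 < 1) :
    Continuous fun θ : ℝ => 1 / √(1 - k ^ 2 * sin θ ^ 2) :=
  continuous_const.div (by fun_prop) fun θ => (sqrt_pos.mpr (one_sub_sq_mul_sin_sq_pos hk θ)).ne'

lemma pi_div_two_le_K {k : ℝ} (hk : k ^ 2 < 1) : π / 2 ≤ K k := by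
  have hconst : (∫ _ in (0:ℝ)..(π / 2), (1:ℝ)) ≤ K k := by
    refine intervalIntegral.integral_mono_on (by positivity) intervalIntegrable_const
      ((continuous_K_integrand hk).intervalIntegrable _ _) fun θ _ => ?_
    refine one_le_one_div (sqrt_pos.mpr (one_sub_sq_mul_sin_sq_pos hk θ)) ?_
    exact sqrt_le_one.mpr (by nlinarith [sq_nonneg (k * sin θ)])
  simpa using hconst

lemma K_le_pi_div_two_div_sqrt {k : ℝ} (hk : k ^ 2 < 1) : K k ≤ π / 2 / √(1 - k ^ 2) := by
  have hbound : K k ≤ ∫ _ in (0:ℝ)..(π / 2), 1 / √(1 - k ^ 2) := by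
    refine intervalIntegral.integral_mono_on (by positivity)
      ((continuous_K_integrand hk).intervalIntegrable _ _) intervalIntegrable_const fun θ _ => ?_
    refine one_div_le_one_div_of_le (sqrt_pos.mpr (by linarith)) (sqrt_le_sqrt ?_)
    nlinarith [mul_le_mul_of_nonneg_left (sin_sq_le_one θ) (sq_nonneg k)]
  simpa [div_eq_mul_inv, mul_comm] using hbound

lemma one_le_E {k : ℝ} (hk : k ^ 2 ≤ 1) : 1 ≤ E k := by
  have hcos : (∫ θ in (0:ℝ)..(π / 2), cos θ) ≤ E k := by
    refine intervalIntegral.integral_mono_on (by positivity)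
      (continuous_cos.intervalIntegrable _ _) ((by fun_prop : Continuous fun θ : ℝ =>
        √(1 - k ^ 2 * sin θ ^ 2)).intervalIntegrable _ _) fun θ hθ => ?_
    have hc : 0 ≤ cos θ := cos_nonneg_of_mem_Icc ⟨by linarith [hθ.1, pi_pos], hθ.2⟩
    rw [← sqrt_sq hc]
    refine sqrt_le_sqrt ?_
    nlinarith [sin_sq_add_cos_sq θ, mul_le_mul_of_nonneg_right hk (sq_nonneg (sin θ))]
  simpa [integral_cos] using hcos

lemma pi_le_four_mul_E'_mul_K_sub_pi {r : ℝ} (hr : r ^ 2 < 1) : π ≤ 4 * E' r * K r - π := by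
  have hE : 1 ≤ E' r := one_le_E (by rw [sq_sqrt (by linarith)]; nlinarith)
  have hK := pi_div_two_le_K hr
  nlinarith [pi_pos]

/-- Jordan's inequality `cos θ ≥ 1 - 2θ/π`, applied to `1 - (1 - r²) sin² θ = cos² θ + r² sin² θ`. -/
lemma K'_integrand_le {r θ : ℝ} (hr0 : 0 < r) (hr1 : r ^ 2 ≤ 1) (hθ : θ ∈ Icc 0 (π / 2)) :
    1 / √(1 - (1 - r ^ 2) * sin θ ^ 2) ≤ √2 / √(r ^ 2 + (1 - 2 / π * θ) ^ 2) := by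
  have ht0 : 0 ≤ 1 - 2 / π * θ := by
    rw [sub_nonneg, div_mul_eq_mul_div, div_le_one pi_pos]; linarith [hθ.2]
  have hcos : (1 - 2 / π * θ) ^ 2 ≤ cos θ ^ 2 := by
    nlinarith [one_sub_mul_le_cos hθ.1 hθ.2]
  have hsq : (r ^ 2 + (1 - 2 / π * θ) ^ 2) / 2 ≤ 1 - (1 - r ^ 2) * sin θ ^ 2 := by
    nlinarith [sin_sq_add_cos_sq θ, sq_nonneg (sin θ)]
  have hsqrt : √(r ^ 2 + (1 - 2 / π * θ) ^ 2) / √2 ≤ √(1 - (1 - r ^ 2) * sin θ ^ 2) := by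
    rw [← sqrt_div (by positivity)]
    exact sqrt_le_sqrt hsq
  calc 1 / √(1 - (1 - r ^ 2) * sin θ ^ 2)
      ≤ 1 / (√(r ^ 2 + (1 - 2 / π * θ) ^ 2) / √2) := one_div_le_one_div_of_le (by positivity) hsqrt
    _ = √2 / √(r ^ 2 + (1 - 2 / π * θ) ^ 2) := one_div_div _ _

lemma hasDerivAt_arsinh_antiderivative {r : ℝ} (hr : 0 < r) (θ : ℝ) :
    HasDerivAt (fun x : ℝ => -(√2 * π / 2) * arsinh ((1 - 2 / π * x) / r))
      (√2 / √(r ^ 2 + (1 - 2 / π * θ) ^ 2)) θ := by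
  have hinner : HasDerivAt (fun x : ℝ => (1 - 2 / π * x) / r) (-(2 / π) / r) θ := by
    simpa using (((hasDerivAt_id θ).const_mul (2 / π)).const_sub 1).div_const r
  have hcomp : HasDerivAt (fun x : ℝ => -(√2 * π / 2) * arsinh ((1 - 2 / π * x) / r))
      (-(√2 * π / 2) * ((√(1 + ((1 - 2 / π * θ) / r) ^ 2))⁻¹ * (-(2 / π) / r))) θ :=
    ((hasDerivAt_arsinh _).comp θ hinner).const_mul _
  convert hcomp using 1
  have hB : 0 < r ^ 2 + (1 - 2 / π * θ) ^ 2 := by positivity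
  have hsqrt : √(1 + ((1 - 2 / π * θ) / r) ^ 2) = √(r ^ 2 + (1 - 2 / π * θ) ^ 2) / r := by
    rw [show 1 + ((1 - 2 / π * θ) / r) ^ 2 = (r ^ 2 + (1 - 2 / π * θ) ^ 2) / r ^ 2 by
      field_simp, sqrt_div hB.le, sqrt_sq hr.le]
  rw [hsqrt]
  field_simp

lemma integral_sqrt_two_div_sqrt {r : ℝ} (hr : 0 < r) :
    ∫ θ in (0:ℝ)..(π / 2), √2 / √(r ^ 2 + (1 - 2 / π * θ) ^ 2) = √2 * π / 2 * arsinh (1 / r) := by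
  have hcont : Continuous fun θ : ℝ => √2 / √(r ^ 2 + (1 - 2 / π * θ) ^ 2) :=
    continuous_const.div (by fun_prop) fun θ => (sqrt_pos.mpr (by positivity)).ne'
  rw [intervalIntegral.integral_eq_sub_of_hasDerivAt
    (fun θ _ => hasDerivAt_arsinh_antiderivative hr θ) (hcont.intervalIntegrable _ _)]
  have hend : (1 - 2 / π * (π / 2)) / r = 0 := by field_simp; ring
  simp only [hend, arsinh_zero, mul_zero, sub_zero, zero_sub]
  ring

lemma arsinh_le_log_three_mul {x : ℝ} (hx : 1 ≤ x) : arsinh x ≤ log (3 * x) := by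
  have hsqrt : √(1 + x ^ 2) ≤ 1 + x := by
    rw [← sqrt_sq (by linarith : 0 ≤ 1 + x)]
    exact sqrt_le_sqrt (by nlinarith)
  exact log_le_log (by positivity) (by linarith)

noncomputable def kPrimeMajorant (r : ℝ) : ℝ := √2 * π / 2 * log (3 / r)

lemma K'_le_kPrimeMajorant {r : ℝ} (hr0 : 0 < r) (hr : r ≤ 1 / 2) : K' r ≤ kPrimeMajorant r := by
  have hr1 : r ^ 2 ≤ 1 := by nlinarith
  have hk : √(1 - r ^ 2) ^ 2 < 1 := by rw [sq_sqrt (by linarith)]; nlinarith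
  have hle : K' r ≤ ∫ θ in (0:ℝ)..(π / 2), √2 / √(r ^ 2 + (1 - 2 / π * θ) ^ 2) := by
    refine intervalIntegral.integral_mono_on (by positivity)
      ((continuous_K_integrand hk).intervalIntegrable _ _) ?_ ?_
    · exact (continuous_const.div (by fun_prop) fun θ =>
        (sqrt_pos.mpr (by positivity)).ne').intervalIntegrable _ _
    · intro θ hθ
      rw [sq_sqrt (by linarith)]
      exact K'_integrand_le hr0 hr1 hθ
  rw [integral_sqrt_two_div_sqrt hr0] at hle
  refine hle.trans (mul_le_mul_of_nonneg_left ?_ (by positivity))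
  simpa [div_eq_mul_inv] using arsinh_le_log_three_mul (one_le_one_div hr0 (by linarith))

lemma one_le_m {r : ℝ} (hr0 : 0 < r) (hr : r ≤ 1 / 2) : 1 ≤ m r := by
  have hr2 : r ^ 2 ≤ 1 / 4 := by nlinarith
  have hK := pi_div_two_le_K (k := r) (by linarith)
  have hK' : π / 2 ≤ K' r := pi_div_two_le_K (by rw [sq_sqrt (by linarith)]; nlinarith)
  have hKK : π / 2 * (π / 2) ≤ K r * K' r := mul_le_mul hK hK' (by positivity) (by linarith [pi_pos])
  have hcoef : 2 / π * (3 / 4) ≤ 2 / π * (1 - r ^ 2) :=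
    mul_le_mul_of_nonneg_left (by linarith) (by positivity)
  calc (1:ℝ) ≤ 2 / π * (3 / 4) * (π / 2 * (π / 2)) := by
        field_simp; linarith [pi_gt_three]
    _ ≤ 2 / π * (1 - r ^ 2) * (K r * K' r) :=
        mul_le_mul hcoef hKK (by positivity) (mul_nonneg (by positivity) (by linarith))
    _ = m r := by rw [m]; ring

/-- `K ≤ π / (2 r')` absorbs the factor `(2/π) r'²` of `m` up to a factor `r' ≤ 1`. -/
lemma m_le_K' {r : ℝ} (hr0 : 0 < r) (hr : r ^ 2 < 1) : m r ≤ K' r := by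
  set w := √(1 - r ^ 2)
  have hw2 : w ^ 2 = 1 - r ^ 2 := sq_sqrt (by linarith)
  have hw1 : w ≤ 1 := sqrt_le_one.mpr (by nlinarith)
  have hK'0 : 0 ≤ K' r := (pi_div_two_le_K (by rw [hw2]; nlinarith)).trans' (by positivity)
  calc m r ≤ 2 / π * (1 - r ^ 2) * (π / 2 / w) * K' r := by
        rw [m]
        gcongr
        exact K_le_pi_div_two_div_sqrt hr
    _ = w * K' r := by rw [← hw2]; field_simp
    _ ≤ K' r := mul_le_of_le_one_left hK'0 hw1

lemma inv_le_rpow_sub_one {x L p : ℝ} (hx : 1 ≤ x) (hxL : x ≤ L) (hp : 0 ≤ p) :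
    L⁻¹ ≤ x ^ (p - 1) := by
  have hL : 1 ≤ L := hx.trans hxL
  rcases le_or_gt 1 p with hp1 | hp1
  · exact (inv_le_one_of_one_le₀ hL).trans (one_le_rpow hx (by linarith))
  · calc L⁻¹ = L ^ (-1 : ℝ) := (rpow_neg_one L).symm
      _ ≤ L ^ (p - 1) := rpow_le_rpow_of_exponent_le hL (by linarith)
      _ ≤ x ^ (p - 1) := rpow_le_rpow_of_nonpos (by linarith) hxL (by linarith)

lemma h_eq {lam r : ℝ} (hr : 0 < r) (hm : 0 < m r) :
    h lam r = (4 * E' r * K r - π) * m r ^ (lam - 1) / r ^ lam := by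
  rw [h, div_rpow hm.le hr.le, rpow_sub hm, rpow_one]
  field_simp

lemma pi_mul_inv_le_h {lam r : ℝ} (hlam : 0 ≤ lam) (hr0 : 0 < r) (hr : r ≤ 1 / 2) :
    π * (kPrimeMajorant r * r ^ lam)⁻¹ ≤ h lam r := by
  have hr1 : r ^ 2 < 1 := by nlinarith
  have hm := one_le_m hr0 hr
  have hmL : m r ≤ kPrimeMajorant r :=
    (m_le_K' hr0 hr1).trans (K'_le_kPrimeMajorant hr0 hr)
  have hA := pi_le_four_mul_E'_mul_K_sub_pi hr1
  have hL : 1 ≤ kPrimeMajorant r := hm.trans hmL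
  rw [h_eq hr0 (by linarith), mul_inv, ← mul_assoc, ← div_eq_mul_inv]
  gcongr
  · linarith [pi_pos]
  · exact inv_le_rpow_sub_one hm hmL hlam

lemma tendsto_kPrimeMajorant_mul_rpow {lam : ℝ} (hlam : 0 < lam) :
    Tendsto (fun r => kPrimeMajorant r * r ^ lam) (𝓝[>] 0) (𝓝[>] 0) := by
  have hpow : Tendsto (fun r : ℝ => r ^ lam) (𝓝[>] 0) (𝓝 0) := by
    simpa [zero_rpow hlam.ne'] using
      ((continuousAt_rpow_const 0 lam (Or.inr hlam.le)).tendsto.mono_left nhdsWithin_le_nhds)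
  have hlim : Tendsto (fun r => √2 * π / 2 * (log 3 * r ^ lam - log r * r ^ lam))
      (𝓝[>] 0) (𝓝 0) := by
    simpa using ((hpow.const_mul (log 3)).sub (tendsto_log_mul_rpow_nhdsGT_zero hlam)).const_mul
      (√2 * π / 2)
  refine tendsto_nhdsWithin_of_tendsto_nhds_of_eventually_within _ ?_ ?_
  · refine hlim.congr' ?_
    filter_upwards [self_mem_nhdsWithin] with r (hr : 0 < r)
    rw [kPrimeMajorant, log_div (by norm_num) hr.ne']
    ring
  · filter_upwards [Ioo_mem_nhdsGT (by norm_num : (0:ℝ) < 3)] with r hr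
    have hlog : 0 < log (3 / r) := log_pos ((one_lt_div hr.1).mpr hr.2)
    exact mul_pos (mul_pos (by positivity) hlog) (rpow_pos_of_pos hr.1 lam)

theorem stmt_16 (lam : ℝ) (hmono : StrictMonoOn (h lam) (Set.Ioo (0:ℝ) 1)) :
    lam ≤ 0 := by
  by_contra! hlam
  have hblowup : Tendsto (fun r => π * (kPrimeMajorant r * r ^ lam)⁻¹) (𝓝[>] 0) atTop :=
    (tendsto_kPrimeMajorant_mul_rpow hlam).inv_tendsto_nhdsGT_zero.const_mul_atTop pi_pos
  obtain ⟨r, hr_large, hr⟩ := ((hblowup.eventually_gt_atTop (h lam (1 / 2))).and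
    (Ioo_mem_nhdsGT (by norm_num : (0:ℝ) < 1 / 2))).exists
  have hlt := hmono ⟨hr.1, by linarith [hr.2]⟩ (by norm_num : (1 / 2 : ℝ) ∈ Ioo 0 1) hr.2
  linarith [pi_mul_inv_le_h hlam.le hr.1 hr.2.le]
end
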